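/- For every nonnegative integer n, the sum over k from 0 to n of L_k^{(alpha)}(x) L_{n-k}^{(-n-alpha-1)}(-y) equals (y-x)^n / n!. -/

import Mathlib

noncomputable def poch (a : ℝ) (k : ℕ) : ℝ := ∏ m ∈ Finset.range k, (a + m)

noncomputable def lag (α : ℝ) (n : ℕ) (x : ℝ) : ℝ :=
  ∑ k ∈ Finset.range (n + 1),
    (-1) ^ k * (poch (α + k + 1) (n - k) / (n - k).factorial) * x ^ k / k.factorial

noncomputable def jacobi (α β : ℝ) (n : ℕ) (x : ℝ) : ℝ :=
  ∑ k ∈ Finset.range (n + 1),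
    poch ((n : ℝ) + α + β + 1) k * poch (α + k + 1) (n - k) /
      (k.factorial * (n - k).factorial) * ((x - 1) / 2) ^ k

noncomputable def charlier (a : ℝ) (n : ℕ) (x : ℝ) : ℝ :=
  ∑ m ∈ Finset.range (n + 1),
    (∏ j ∈ Finset.range m, (x - (j : ℝ))) / m.factorial * (-a) ^ (n - m) / (n - m).factorial
/-! With `c a m = poch a m / m!`, expanding both Laguerre polynomials turns the sum into a sum over
`i + m + j + p = n` of `(-x)^i/i! * y^j/j! * c (α+i+1) m * c (β+j+1) p`, where `β = -n-α-1`.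
Grouping by `r = m + p`, the Chu–Vandermonde identity for rising factorials collapses the inner sum
to `c (1-r) r`, because `(α+i+1) + (β+j+1) = 1 - r`; this vanishes unless `r = 0`, and what remains
is the binomial expansion of `(y - x)^n / n!`. -/

open Finset Nat

theorem sum_antidiagonal_interchange {M : Type*} [AddCommMonoid M] (n : ℕ)
    (g : ℕ → ℕ → ℕ → ℕ → M) :
    ∑ kl ∈ antidiagonal n, ∑ im ∈ antidiagonal kl.1, ∑ jp ∈ antidiagonal kl.2,
        g im.1 im.2 jp.1 jp.2 =
      ∑ sr ∈ antidiagonal n, ∑ ij ∈ antidiagonal sr.1, ∑ mp ∈ antidiagonal sr.2,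
        g ij.1 mp.1 ij.2 mp.2 := by
  simp only [sum_sigma']
  apply sum_nbij' (fun ⟨_, (i, m), (j, p)⟩ ↦ ⟨(i + j, m + p), (i, j), (m, p)⟩)
    (fun ⟨_, (i, j), (m, p)⟩ ↦ ⟨(i + m, j + p), (i, m), (j, p)⟩) <;>
    aesop (add simp [add_assoc, add_left_comm])

theorem sum_antidiagonal_choose_mul_div_factorial {K : Type*} [Field K] [CharZero K]
    (f : ℕ → ℕ → K) (N : ℕ) :
    (∑ ij ∈ antidiagonal N, (N.choose ij.1 : K) * f ij.1 ij.2) / N ! =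
      ∑ ij ∈ antidiagonal N, f ij.1 ij.2 / (ij.1 ! * ij.2 !) := by
  rw [sum_div]
  refine sum_congr rfl fun ⟨i, j⟩ hij => ?_
  rw [HasAntidiagonal.mem_antidiagonal] at hij
  subst hij
  have : ((i + j) ! : K) ≠ 0 := cast_ne_zero.mpr (factorial_ne_zero _)
  rw [cast_add_choose]
  field_simp

theorem add_pow_div_factorial {K : Type*} [Field K] [CharZero K] (x y : K) (n : ℕ) :
    (x + y) ^ n / n ! = ∑ ij ∈ antidiagonal n, x ^ ij.1 / ij.1 ! * (y ^ ij.2 / ij.2 !) := by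
  simp only [(Commute.all x y).add_pow', nsmul_eq_mul,
    sum_antidiagonal_choose_mul_div_factorial (fun i j => x ^ i * y ^ j), mul_div_mul_comm]

theorem poch_succ (a : ℝ) (k : ℕ) : poch a (k + 1) = poch a k * (a + k) :=
  prod_range_succ _ _

theorem poch_add (a b : ℝ) (N : ℕ) :
    poch (a + b) N =
      ∑ ij ∈ antidiagonal N, (N.choose ij.1 : ℝ) * (poch a ij.1 * poch b ij.2) := by
  induction N with
  | zero => simp [poch]
  | succ N ih =>
    rw [sum_antidiagonal_choose_succ_mul (fun i j => poch a i * poch b j), poch_succ, ih,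
      sum_mul, ← sum_add_distrib]
    refine sum_congr rfl fun ⟨i, j⟩ hij => ?_
    rw [HasAntidiagonal.mem_antidiagonal] at hij
    subst hij
    rw [← choose_symm_add, poch_succ, poch_succ]
    push_cast
    ring

theorem poch_add_div_factorial (a b : ℝ) (N : ℕ) :
    poch (a + b) N / N ! =
      ∑ ij ∈ antidiagonal N, poch a ij.1 / ij.1 ! * (poch b ij.2 / ij.2 !) := by
  simp only [poch_add, sum_antidiagonal_choose_mul_div_factorial (fun i j => poch a i * poch b j),
    mul_div_mul_comm]

theorem sum_antidiagonal_mul_poch_one_sub_self (F : ℕ → ℝ) (n : ℕ) :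
    ∑ sr ∈ antidiagonal n, F sr.1 * (poch (1 - sr.2) sr.2 / sr.2 !) = F n := by
  cases n with
  | zero => simp [poch]
  | succ n =>
    rw [Nat.sum_antidiagonal_succ', sum_eq_zero fun sr _ => ?_]
    · simp [poch]
    · rw [poch_succ]
      push_cast
      simp

theorem lag_eq_sum_antidiagonal (α x : ℝ) (k : ℕ) :
    lag α k x =
      ∑ im ∈ antidiagonal k, (-x) ^ im.1 / im.1 ! * (poch (α + im.1 + 1) im.2 / im.2 !) := by
  rw [lag, Nat.sum_antidiagonal_eq_sum_range_succ
    (fun i m => (-x) ^ i / i ! * (poch (α + i + 1) m / m !))]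
  refine sum_congr rfl fun i _ => ?_
  rw [neg_pow]
  ring

theorem stmt16 (α x y : ℝ) (n : ℕ) :
    ∑ k ∈ Finset.range (n + 1), lag α k x * lag (-(n : ℝ) - α - 1) (n - k) (-y) =
      (y - x) ^ n / n.factorial := by
  set β : ℝ := -(n : ℝ) - α - 1
  calc ∑ k ∈ range (n + 1), lag α k x * lag β (n - k) (-y)
      = ∑ kl ∈ antidiagonal n, ∑ im ∈ antidiagonal kl.1, ∑ jp ∈ antidiagonal kl.2,
          (-x) ^ im.1 / im.1 ! * (poch (α + im.1 + 1) im.2 / im.2 !) *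
            (y ^ jp.1 / jp.1 ! * (poch (β + jp.1 + 1) jp.2 / jp.2 !)) := by
        rw [← Nat.sum_antidiagonal_eq_sum_range_succ (fun k l => lag α k x * lag β l (-y))]
        simp only [lag_eq_sum_antidiagonal, neg_neg, sum_mul_sum]
    _ = ∑ sr ∈ antidiagonal n, (∑ ij ∈ antidiagonal sr.1,
          (-x) ^ ij.1 / ij.1 ! * (y ^ ij.2 / ij.2 !)) * (poch (1 - sr.2) sr.2 / sr.2 !) := by
        rw [sum_antidiagonal_interchange n fun i m j p => (-x) ^ i / i ! *
          (poch (α + i + 1) m / m !) * (y ^ j / j ! * (poch (β + j + 1) p / p !))]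
        refine sum_congr rfl fun ⟨s, r⟩ hsr => ?_
        rw [sum_mul]
        refine sum_congr rfl fun ⟨i, j⟩ hij => ?_
        simp only [HasAntidiagonal.mem_antidiagonal] at hsr hij
        have hsum : (α + i + 1) + (β + j + 1) = 1 - r := by
          simp only [β, ← hsr, ← hij, cast_add]
          ring
        rw [← hsum, poch_add_div_factorial, mul_sum]
        exact sum_congr rfl fun _ _ => by ring
    _ = ∑ ij ∈ antidiagonal n, (-x) ^ ij.1 / ij.1 ! * (y ^ ij.2 / ij.2 !) :=
        sum_antidiagonal_mul_poch_one_sub_self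
          (fun s => ∑ ij ∈ antidiagonal s, (-x) ^ ij.1 / ij.1 ! * (y ^ ij.2 / ij.2 !)) n
    _ = (y - x) ^ n / n ! := by
        rw [← add_pow_div_factorial, neg_add_eq_sub]
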